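/- For every locally compact SIN group G, the convolution map (m, n) ↦ m ∗ n is jointly continuous on all of LUC(G)* × LUC(G)* when LUC(G)* carries the UEB topology (no boundedness restriction). -/

import Mathlib

noncomputable section
set_option linter.unusedSectionVars false

open Filter Topology MeasureTheory BoundedContinuousFunction

section Defs

variable (G : Type*) [Group G] [TopologicalSpace G] [IsTopologicalGroup G]

/-- A bounded left uniformly continuous function on a topological group. -/
def IsLUCFun (f : G → ℂ) : Prop :=
  (∃ C, ∀ s, ‖f s‖ ≤ C) ∧
    ∀ ε > 0, ∃ U ∈ 𝓝 (1 : G), ∀ s t : G, s * t⁻¹ ∈ U → ‖f s - f t‖ < ε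

/-- A set of functions is equi-LUC if it is uniformly bounded in the sup norm and
equi-uniformly continuous for the right uniformity. -/
def EquiLUCFun (F : Set (G → ℂ)) : Prop :=
  (∃ C, ∀ f ∈ F, ∀ s, ‖f s‖ ≤ C) ∧
    ∀ ε > 0, ∃ U ∈ 𝓝 (1 : G), ∀ f ∈ F, ∀ s t : G, s * t⁻¹ ∈ U → ‖f s - f t‖ < ε

/-- A SIN group: there is a base of neighbourhoods of the identity that are
invariant under all inner automorphisms. -/
def IsSIN : Prop :=
  ∀ U ∈ 𝓝 (1 : G), ∃ V ∈ 𝓝 (1 : G), V ⊆ U ∧ ∀ x : G, ∀ v ∈ V, x * v * x⁻¹ ∈ V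

end Defs

section LUCSpace

variable (G : Type*) [Group G] [TopologicalSpace G] [IsTopologicalGroup G]

/-- The space `LUC(G)` of bounded left uniformly continuous complex functions on `G`,
as a subspace of the bounded continuous functions with the sup norm. -/
def LUC : Submodule ℂ (G →ᵇ ℂ) where
  carrier := {f | ∀ ε > 0, ∃ U ∈ 𝓝 (1 : G), ∀ s t : G, s * t⁻¹ ∈ U → ‖f s - f t‖ < ε}
  zero_mem' := fun ε hε => ⟨Set.univ, Filter.univ_mem, fun s t _ => by simpa using hε⟩
  add_mem' := by
    intro f g hf hg ε hε
    obtain ⟨U, hU, hUf⟩ := hf (ε / 2) (by linarith)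
    obtain ⟨V, hV, hVg⟩ := hg (ε / 2) (by linarith)
    refine ⟨U ∩ V, Filter.inter_mem hU hV, fun s t hst => ?_⟩
    have h1 := hUf s t hst.1
    have h2 := hVg s t hst.2
    have e : (f + g) s - (f + g) t = (f s - f t) + (g s - g t) := by
      simp only [BoundedContinuousFunction.coe_add, Pi.add_apply]; ring
    calc ‖(f + g) s - (f + g) t‖ ≤ ‖f s - f t‖ + ‖g s - g t‖ := by
          rw [e]; exact norm_add_le _ _
      _ < ε := by linarith
  smul_mem' := by
    intro c f hf ε hε
    obtain ⟨U, hU, hUf⟩ := hf (ε / (‖c‖ + 1)) (by positivity)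
    refine ⟨U, hU, fun s t hst => ?_⟩
    have h := hUf s t hst
    have e : (c • f) s - (c • f) t = c * (f s - f t) := by
      simp only [BoundedContinuousFunction.coe_smul, Pi.smul_apply, smul_eq_mul]; ring
    rw [e, norm_mul]
    calc ‖c‖ * ‖f s - f t‖ ≤ ‖c‖ * (ε / (‖c‖ + 1)) :=
          mul_le_mul_of_nonneg_left h.le (norm_nonneg c)
      _ < (‖c‖ + 1) * (ε / (‖c‖ + 1)) :=
          mul_lt_mul_of_pos_right (by linarith) (by positivity)
      _ = ε := by field_simp

/-- Equi-LUC subsets of the space `LUC(G)`. -/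
def EquiLUC (F : Set ↥(LUC G)) : Prop :=
  (∃ C, ∀ f ∈ F, ‖f‖ ≤ C) ∧
    ∀ ε > 0, ∃ U ∈ 𝓝 (1 : G), ∀ f ∈ F, ∀ s t : G,
      s * t⁻¹ ∈ U → ‖(f : G →ᵇ ℂ) s - (f : G →ᵇ ℂ) t‖ < ε

variable {G}

lemma lTrans_mem (s : G) {f : G →ᵇ ℂ} (hf : f ∈ LUC G) :
    f.compContinuous ⟨fun x => s * x, by continuity⟩ ∈ LUC G := by
  intro ε hε
  obtain ⟨U, hU, hUf⟩ := hf ε hε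
  refine ⟨(fun u => s * u * s⁻¹) ⁻¹' U, ?_, ?_⟩
  · have hc : ContinuousAt (fun u : G => s * u * s⁻¹) 1 := by fun_prop
    exact hc.preimage_mem_nhds (by simpa using hU)
  · intro x y hxy
    have h' : (s * x) * (s * y)⁻¹ ∈ U := by
      have h'' : s * (x * y⁻¹) * s⁻¹ ∈ U := hxy
      simpa [mul_inv_rev, mul_assoc] using h''
    exact hUf (s * x) (s * y) h'

/-- Left translation `ℓ_s f (x) = f (s x)` on `LUC(G)`. -/
def lTrans (s : G) (f : ↥(LUC G)) : ↥(LUC G) :=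
  ⟨(f : G →ᵇ ℂ).compContinuous ⟨fun x => s * x, by continuity⟩, lTrans_mem s f.2⟩

@[simp] lemma lTrans_apply (s : G) (f : ↥(LUC G)) (x : G) :
    ((lTrans s f : ↥(LUC G)) : G →ᵇ ℂ) x = (f : G →ᵇ ℂ) (s * x) := rfl

variable (G) in
/-- The dual Banach space `LUC(G)*`. -/
abbrev LUCDual := StrongDual ℂ ↥(LUC G)

lemma lTrans_norm_le (s : G) (f : ↥(LUC G)) : ‖lTrans s f‖ ≤ ‖f‖ :=
  BoundedContinuousFunction.norm_compContinuous_le _ _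

lemma lTrans_add (s : G) (f g : ↥(LUC G)) :
    lTrans s (f + g) = lTrans s f + lTrans s g := by
  apply Subtype.ext; ext x; rfl

lemma lTrans_smul (s : G) (c : ℂ) (f : ↥(LUC G)) :
    lTrans s (c • f) = c • lTrans s f := by
  apply Subtype.ext; ext x; rfl

lemma luccond_continuous {g : G → ℂ}
    (h : ∀ ε > 0, ∃ U ∈ 𝓝 (1 : G), ∀ s t : G, s * t⁻¹ ∈ U → ‖g s - g t‖ < ε) :
    Continuous g := by
  rw [continuous_iff_continuousAt]
  intro t
  rw [ContinuousAt, Metric.tendsto_nhds]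
  intro ε hε
  obtain ⟨U, hU, hUf⟩ := h ε hε
  have hmem : {s : G | s * t⁻¹ ∈ U} ∈ 𝓝 t := by
    have hc : ContinuousAt (fun s : G => s * t⁻¹) t := by fun_prop
    exact hc.preimage_mem_nhds (by simpa using hU)
  filter_upwards [hmem] with s hs
  rw [dist_eq_norm]
  exact hUf s t hs

lemma rAct_cond (n : LUCDual G) (f : ↥(LUC G)) :
    ∀ ε > 0, ∃ U ∈ 𝓝 (1 : G), ∀ s t : G, s * t⁻¹ ∈ U →
      ‖n (lTrans s f) - n (lTrans t f)‖ < ε := by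
  intro ε hε
  set δ := ε / (2 * (‖n‖ + 1)) with hδdef
  have hδ : 0 < δ := by positivity
  obtain ⟨U, hU, hUf⟩ := f.2 δ hδ
  refine ⟨U, hU, fun s t hst => ?_⟩
  have hdiff : ‖lTrans s f - lTrans t f‖ ≤ δ := by
    have : ‖((lTrans s f : ↥(LUC G)) : G →ᵇ ℂ) - ((lTrans t f : ↥(LUC G)) : G →ᵇ ℂ)‖ ≤ δ := by
      apply BoundedContinuousFunction.norm_le hδ.le |>.2
      intro x
      have hx : (s * x) * (t * x)⁻¹ ∈ U := by
        simpa [mul_inv_rev, mul_assoc] using hst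
      simpa using (hUf (s * x) (t * x) hx).le
    exact this
  calc ‖n (lTrans s f) - n (lTrans t f)‖ = ‖n (lTrans s f - lTrans t f)‖ := by
        rw [map_sub]
    _ ≤ ‖n‖ * ‖lTrans s f - lTrans t f‖ := n.le_opNorm _
    _ ≤ ‖n‖ * δ := mul_le_mul_of_nonneg_left hdiff (norm_nonneg n)
    _ < (‖n‖ + 1) * δ := mul_lt_mul_of_pos_right (by linarith) hδ
    _ = ε / 2 := by rw [hδdef]; field_simp
    _ < ε := by linarith

/-- The function `r_n f : s ↦ n (ℓ_s f)`, as an element of `LUC(G)`. -/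
def rAct (n : LUCDual G) (f : ↥(LUC G)) : ↥(LUC G) :=
  ⟨BoundedContinuousFunction.ofNormedAddCommGroup (fun s => n (lTrans s f))
      (luccond_continuous (rAct_cond n f))
      (‖n‖ * ‖f‖)
      (fun s => by
        calc ‖n (lTrans s f)‖ ≤ ‖n‖ * ‖lTrans s f‖ := n.le_opNorm _
          _ ≤ ‖n‖ * ‖f‖ := mul_le_mul_of_nonneg_left (lTrans_norm_le s f) (norm_nonneg n)),
   fun ε hε => by
      obtain ⟨U, hU, h⟩ := rAct_cond n f ε hε
      exact ⟨U, hU, fun s t hst => h s t hst⟩⟩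

@[simp] lemma rAct_apply (n : LUCDual G) (f : ↥(LUC G)) (s : G) :
    ((rAct n f : ↥(LUC G)) : G →ᵇ ℂ) s = n (lTrans s f) := rfl

lemma rAct_norm_le (n : LUCDual G) (f : ↥(LUC G)) : ‖rAct n f‖ ≤ ‖n‖ * ‖f‖ := by
  have h0 : (0 : ℝ) ≤ ‖n‖ * ‖f‖ := by positivity
  show ‖((rAct n f : ↥(LUC G)) : G →ᵇ ℂ)‖ ≤ ‖n‖ * ‖f‖
  refine (BoundedContinuousFunction.norm_le h0).2 fun s => ?_
  calc ‖n (lTrans s f)‖ ≤ ‖n‖ * ‖lTrans s f‖ := n.le_opNorm _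
    _ ≤ ‖n‖ * ‖f‖ := mul_le_mul_of_nonneg_left (lTrans_norm_le s f) (norm_nonneg n)

lemma rAct_add (n : LUCDual G) (f g : ↥(LUC G)) :
    rAct n (f + g) = rAct n f + rAct n g := by
  apply Subtype.ext
  ext s
  simp [rAct_apply, lTrans_add, map_add]

lemma rAct_smul (n : LUCDual G) (c : ℂ) (f : ↥(LUC G)) :
    rAct n (c • f) = c • rAct n f := by
  apply Subtype.ext
  ext s
  simp [rAct_apply, lTrans_smul, _root_.map_smul]

/-- Convolution on `LUC(G)*`: `(m ∗ n)(f) = m (r_n f)`. -/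
def conv (m n : LUCDual G) : LUCDual G :=
  LinearMap.mkContinuous
    { toFun := fun f => m (rAct n f)
      map_add' := by
        intro f g
        show m (rAct n (f + g)) = m (rAct n f) + m (rAct n g)
        rw [rAct_add, map_add]
      map_smul' := by
        intro c f
        show m (rAct n (c • f)) = c • m (rAct n f)
        rw [rAct_smul, _root_.map_smul] }
    (‖m‖ * ‖n‖)
    (fun f => by
      calc ‖m (rAct n f)‖ ≤ ‖m‖ * ‖rAct n f‖ := m.le_opNorm _
        _ ≤ ‖m‖ * (‖n‖ * ‖f‖) :=
            mul_le_mul_of_nonneg_left (rAct_norm_le n f) (norm_nonneg m)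
        _ = ‖m‖ * ‖n‖ * ‖f‖ := by ring)

@[simp] lemma conv_apply (m n : LUCDual G) (f : ↥(LUC G)) :
    conv m n f = m (rAct n f) := rfl

variable (G) in
/-- Convergence of a net in the UEB topology on `LUC(G)*`:
uniform convergence on every equi-LUC set. -/
def UEBTendsto {ι : Type*} (l : Filter ι) (m : ι → LUCDual G) (m₀ : LUCDual G) : Prop :=
  ∀ F : Set ↥(LUC G), EquiLUC G F → ∀ ε > 0, ∀ᶠ i in l, ∀ f ∈ F, ‖m i f - m₀ f‖ < ε

variable (G) in
/-- The UEB topology on `LUC(G)*`: the topology of uniform convergence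
on the equi-LUC subsets of `LUC(G)`. -/
def UEBTop : TopologicalSpace (LUCDual G) :=
  ⨅ F : {F : Set ↥(LUC G) // EquiLUC G F},
    TopologicalSpace.induced
      (fun m => UniformFun.ofFun (fun f : F.1 => m f.1) : LUCDual G → UniformFun F.1 ℂ)
      inferInstance

end LUCSpace

/-!
Write `m ∗ n - m₀ ∗ n₀ = (m - m₀) ∗ n + m₀ ∗ (n - n₀)`. The second term is small as soon as
`n - n₀` is small on the left translates of an equi-LUC set `F`. For the first, one needs an
equi-LUC set `D` such that the functions `r_n f` (`f ∈ F`, `n` bounded on `D`) are again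
equi-LUC. In a SIN group the translates of `F` are equi-LUC, and `D = controlSet F W` adds to
them the rescaled differences `2ᵏ ℓ_t (ℓ_w f - f)`, `w ∈ W k`, where `F` oscillates by less
than `4⁻ᵏ` on `W k`: these have norm at most `2⁻ᵏ`, so `D` stays equi-LUC, while a functional
bounded by `c` on `D` makes `r_n f` oscillate by at most `c 2⁻ᵏ` over `W k`.
-/

section Convolution

open scoped Pointwise

variable {G : Type*} [Group G] [TopologicalSpace G] [IsTopologicalGroup G]

lemma LUC.norm_le {f : ↥(LUC G)} {c : ℝ} (hc : 0 ≤ c) :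
    ‖f‖ ≤ c ↔ ∀ x, ‖(f : G →ᵇ ℂ) x‖ ≤ c :=
  BoundedContinuousFunction.norm_le hc

lemma LUC.norm_apply_le (f : ↥(LUC G)) (x : G) : ‖(f : G →ᵇ ℂ) x‖ ≤ ‖f‖ :=
  BoundedContinuousFunction.norm_coe_le_norm _ _

lemma lTrans_sub (s : G) (f g : ↥(LUC G)) :
    lTrans s (f - g) = lTrans s f - lTrans s g :=
  rfl

lemma lTrans_lTrans (s t : G) (f : ↥(LUC G)) : lTrans s (lTrans t f) = lTrans (t * s) f := by
  apply Subtype.ext; ext x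
  simp [mul_assoc]

lemma sub_rAct (n n₀ : LUCDual G) (f : ↥(LUC G)) :
    rAct (n - n₀) f = rAct n f - rAct n₀ f :=
  rfl

lemma norm_rAct_le {q : LUCDual G} {f : ↥(LUC G)} {c : ℝ} (hc : 0 ≤ c)
    (h : ∀ s, ‖q (lTrans s f)‖ ≤ c) : ‖rAct q f‖ ≤ c :=
  (LUC.norm_le hc).2 h

lemma rAct_apply_sub_rAct_apply (q : LUCDual G) (f : ↥(LUC G)) (x y : G) :
    ((rAct q f : ↥(LUC G)) : G →ᵇ ℂ) x - ((rAct q f : ↥(LUC G)) : G →ᵇ ℂ) y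
      = q (lTrans y (lTrans (x * y⁻¹) f - f)) := by
  rw [rAct_apply, rAct_apply, lTrans_sub, lTrans_lTrans, inv_mul_cancel_right, map_sub]

lemma EquiLUC.mono {F F' : Set ↥(LUC G)} (hF : EquiLUC G F) (h : F' ⊆ F) : EquiLUC G F' :=
  ⟨hF.1.imp fun _ hC f hf => hC f (h hf),
    fun ε hε => (hF.2 ε hε).imp fun _ ⟨hU, hUF⟩ => ⟨hU, fun f hf => hUF f (h hf)⟩⟩

lemma EquiLUC.union {F F' : Set ↥(LUC G)} (hF : EquiLUC G F) (hF' : EquiLUC G F') :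
    EquiLUC G (F ∪ F') := by
  obtain ⟨⟨C, hC⟩, hFU⟩ := hF
  obtain ⟨⟨C', hC'⟩, hF'U⟩ := hF'
  refine ⟨⟨max C C', ?_⟩, fun ε hε => ?_⟩
  · rintro f (hf | hf)
    exacts [(hC f hf).trans (le_max_left _ _), (hC' f hf).trans (le_max_right _ _)]
  · obtain ⟨U, hU, hUF⟩ := hFU ε hε
    obtain ⟨U', hU', hU'F'⟩ := hF'U ε hε
    refine ⟨U ∩ U', inter_mem hU hU', ?_⟩
    rintro f (hf | hf) s t hst
    exacts [hUF f hf s t hst.1, hU'F' f hf s t hst.2]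

lemma EquiLUC.sub {F F' : Set ↥(LUC G)} (hF : EquiLUC G F) (hF' : EquiLUC G F') :
    EquiLUC G (F - F') := by
  obtain ⟨⟨C, hC⟩, hFU⟩ := hF
  obtain ⟨⟨C', hC'⟩, hF'U⟩ := hF'
  refine ⟨⟨C + C', ?_⟩, fun ε hε => ?_⟩
  · rintro _ ⟨f, hf, f', hf', rfl⟩
    exact (norm_sub_le f f').trans (add_le_add (hC f hf) (hC' f' hf'))
  · obtain ⟨U, hU, hUF⟩ := hFU (ε / 2) (half_pos hε)
    obtain ⟨U', hU', hU'F'⟩ := hF'U (ε / 2) (half_pos hε)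
    refine ⟨U ∩ U', inter_mem hU hU', ?_⟩
    rintro _ ⟨f, hf, f', hf', rfl⟩ s t hst
    calc ‖((f - f' : ↥(LUC G)) : G →ᵇ ℂ) s - ((f - f' : ↥(LUC G)) : G →ᵇ ℂ) t‖
        = ‖((f : G →ᵇ ℂ) s - (f : G →ᵇ ℂ) t) - ((f' : G →ᵇ ℂ) s - (f' : G →ᵇ ℂ) t)‖ := by
          congr 1
          simp only [Submodule.coe_sub, BoundedContinuousFunction.coe_sub, Pi.sub_apply]
          ring
      _ ≤ ‖(f : G →ᵇ ℂ) s - (f : G →ᵇ ℂ) t‖ + ‖(f' : G →ᵇ ℂ) s - (f' : G →ᵇ ℂ) t‖ :=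
          norm_sub_le _ _
      _ < ε := by linarith [hUF f hf s t hst.1, hU'F' f' hf' s t hst.2]

lemma EquiLUC.smul {F : Set ↥(LUC G)} (hF : EquiLUC G F) (c : ℂ) : EquiLUC G (c • F) := by
  obtain ⟨⟨C, hC⟩, hFU⟩ := hF
  refine ⟨⟨‖c‖ * C, ?_⟩, fun ε hε => ?_⟩
  · rintro _ ⟨f, hf, rfl⟩
    rw [norm_smul]
    exact mul_le_mul_of_nonneg_left (hC f hf) (norm_nonneg c)
  · obtain ⟨U, hU, hUF⟩ := hFU (ε / (‖c‖ + 1)) (by positivity)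
    refine ⟨U, hU, ?_⟩
    rintro _ ⟨f, hf, rfl⟩ s t hst
    calc ‖((c • f : ↥(LUC G)) : G →ᵇ ℂ) s - ((c • f : ↥(LUC G)) : G →ᵇ ℂ) t‖
        = ‖c‖ * ‖(f : G →ᵇ ℂ) s - (f : G →ᵇ ℂ) t‖ := by
          rw [← norm_mul, mul_sub]; rfl
      _ ≤ ‖c‖ * (ε / (‖c‖ + 1)) := by gcongr; exact (hUF f hf s t hst).le
      _ < ε := by
          rw [← mul_div_assoc, div_lt_iff₀ (by positivity)]
          nlinarith [norm_nonneg c]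

lemma EquiLUC.iUnion_of_tendsto {A : ℕ → Set ↥(LUC G)} {b : ℕ → ℝ}
    (hA : ∀ k, EquiLUC G (A k)) (hAb : ∀ k, ∀ f ∈ A k, ‖f‖ ≤ b k)
    (hb : Tendsto b atTop (𝓝 0)) : EquiLUC G (⋃ k, A k) := by
  obtain ⟨B, hB⟩ := hb.bddAbove_range
  refine ⟨⟨B, fun f hf => ?_⟩, fun ε hε => ?_⟩
  · obtain ⟨k, hk⟩ := Set.mem_iUnion.1 hf
    exact (hAb k f hk).trans (hB ⟨k, rfl⟩)
  obtain ⟨k₀, hk₀⟩ := eventually_atTop.1 (hb.eventually_lt_const (half_pos hε))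
  choose U hU hUA using fun k => (hA k).2 ε hε
  refine ⟨⋂ k ∈ Finset.range k₀, U k, (biInter_finset_mem _).2 fun k _ => hU k, ?_⟩
  intro f hf s t hst
  obtain ⟨k, hk⟩ := Set.mem_iUnion.1 hf
  rcases lt_or_ge k k₀ with hkk₀ | hk₀k
  · exact hUA k f hk s t (Set.mem_iInter₂.1 hst k (Finset.mem_range.2 hkk₀))
  · have hs := (LUC.norm_apply_le f s).trans (hAb k f hk)
    have ht := (LUC.norm_apply_le f t).trans (hAb k f hk)
    calc ‖(f : G →ᵇ ℂ) s - (f : G →ᵇ ℂ) t‖ ≤ ‖(f : G →ᵇ ℂ) s‖ + ‖(f : G →ᵇ ℂ) t‖ :=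
          norm_sub_le _ _
      _ < ε := by linarith [hk₀ k hk₀k]

def translates (F : Set ↥(LUC G)) : Set ↥(LUC G) :=
  ⋃ s : G, lTrans s '' F

lemma lTrans_mem_translates {F : Set ↥(LUC G)} (s : G) {f : ↥(LUC G)} (hf : f ∈ F) :
    lTrans s f ∈ translates F :=
  Set.mem_iUnion.2 ⟨s, f, hf, rfl⟩

lemma IsSIN.equiLUC_translates (hSIN : IsSIN G) {F : Set ↥(LUC G)} (hF : EquiLUC G F) :
    EquiLUC G (translates F) := by
  obtain ⟨⟨C, hC⟩, hFU⟩ := hF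
  refine ⟨⟨C, fun _ hg => ?_⟩, fun ε hε => ?_⟩
  · obtain ⟨s, f, hf, rfl⟩ := Set.mem_iUnion.1 hg
    exact (lTrans_norm_le s f).trans (hC f hf)
  obtain ⟨U, hU, hUF⟩ := hFU ε hε
  obtain ⟨V, hV, hVU, hVconj⟩ := hSIN U hU
  refine ⟨V, hV, ?_⟩
  rintro _ hg x y hxy
  obtain ⟨s, f, hf, rfl⟩ := Set.mem_iUnion.1 hg
  have hconj : (s * x) * (s * y)⁻¹ = s * (x * y⁻¹) * s⁻¹ := by group
  exact hUF f hf _ _ (hVU (hconj ▸ hVconj s _ hxy))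

def controlSet (F : Set ↥(LUC G)) (W : ℕ → Set G) : Set ↥(LUC G) :=
  translates F ∪
    ⋃ k : ℕ, {h | ∃ f ∈ F, ∃ w ∈ W k, ∃ t : G, h = (2 : ℂ) ^ k • lTrans t (lTrans w f - f)}

lemma IsSIN.equiLUC_controlSet (hSIN : IsSIN G) {F : Set ↥(LUC G)} (hF : EquiLUC G F)
    {W : ℕ → Set G}
    (hW : ∀ k, ∀ f ∈ F, ∀ s t : G, s * t⁻¹ ∈ W k → ‖(f : G →ᵇ ℂ) s - (f : G →ᵇ ℂ) t‖ < 4⁻¹ ^ k) :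
    EquiLUC G (controlSet F W) := by
  have hT := hSIN.equiLUC_translates hF
  refine hT.union (EquiLUC.iUnion_of_tendsto (b := fun k => 2⁻¹ ^ k) (fun k => ?_) ?_
    (tendsto_pow_atTop_nhds_zero_of_lt_one (by norm_num) (by norm_num)))
  · refine ((hT.sub hT).smul ((2 : ℂ) ^ k)).mono ?_
    rintro _ ⟨f, hf, w, -, t, rfl⟩
    rw [lTrans_sub, lTrans_lTrans]
    exact Set.smul_mem_smul_set
      (Set.sub_mem_sub (lTrans_mem_translates _ hf) (lTrans_mem_translates _ hf))
  · rintro k _ ⟨f, hf, w, hw, t, rfl⟩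
    have hdiff : ‖lTrans t (lTrans w f - f)‖ ≤ 4⁻¹ ^ k := by
      refine (LUC.norm_le (by positivity)).2 fun x => ?_
      exact (hW k f hf (w * (t * x)) (t * x) (by rwa [mul_inv_cancel_right])).le
    calc ‖(2 : ℂ) ^ k • lTrans t (lTrans w f - f)‖
        = 2 ^ k * ‖lTrans t (lTrans w f - f)‖ := by rw [norm_smul, norm_pow, RCLike.norm_ofNat]
      _ ≤ 2 ^ k * 4⁻¹ ^ k := by gcongr
      _ = 2⁻¹ ^ k := by rw [← mul_pow]; norm_num

lemma equiLUC_image2_rAct_controlSet {F : Set ↥(LUC G)} {W : ℕ → Set G}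
    (hW : ∀ k, W k ∈ 𝓝 (1 : G)) (c : ℝ) :
    EquiLUC G (Set.image2 rAct {q : LUCDual G | ∀ d ∈ controlSet F W, ‖q d‖ ≤ c} F) := by
  refine ⟨⟨max c 0, ?_⟩, fun ε hε => ?_⟩
  · rintro _ ⟨q, hq, f, hf, rfl⟩
    exact norm_rAct_le (le_max_right c 0) fun s =>
      (hq _ (Or.inl (lTrans_mem_translates s hf))).trans (le_max_left c 0)
  obtain ⟨k, hk⟩ := (((tendsto_pow_atTop_nhds_zero_of_lt_one (r := (2⁻¹ : ℝ)) (by norm_num)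
    (by norm_num)).const_mul c).eventually_lt_const (by simpa using hε)).exists
  refine ⟨W k, hW k, ?_⟩
  rintro _ ⟨q, hq, f, hf, rfl⟩ x y hxy
  rw [rAct_apply_sub_rAct_apply]
  have hmem : (2 : ℂ) ^ k • lTrans y (lTrans (x * y⁻¹) f - f) ∈ controlSet F W :=
    Or.inr (Set.mem_iUnion.2 ⟨k, f, hf, x * y⁻¹, hxy, y, rfl⟩)
  have hq' := hq _ hmem
  rw [map_smul, norm_smul, norm_pow, RCLike.norm_ofNat] at hq'
  calc ‖q (lTrans y (lTrans (x * y⁻¹) f - f))‖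
      = 2⁻¹ ^ k * (2 ^ k * ‖q (lTrans y (lTrans (x * y⁻¹) f - f))‖) := by
        rw [← mul_assoc, ← mul_pow]; norm_num
    _ ≤ 2⁻¹ ^ k * c := by gcongr
    _ < ε := by linarith

lemma tendsto_uebTop_iff {ι : Type*} {l : Filter ι} {m : ι → LUCDual G} {m₀ : LUCDual G} :
    Tendsto m l (@nhds _ (UEBTop G) m₀) ↔ UEBTendsto G l m m₀ := by
  rw [UEBTop, nhds_iInf, tendsto_iInf, Subtype.forall]
  refine forall₂_congr fun F _ => ?_
  rw [nhds_induced, tendsto_comap_iff, UniformFun.tendsto_iff_tendstoUniformly,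
    Metric.tendstoUniformly_iff]
  simp only [Function.comp_apply, UniformFun.toFun_ofFun, SetCoe.forall, dist_comm (m₀ _),
    dist_eq_norm]

theorem IsSIN.uebTendsto_conv (hSIN : IsSIN G) {ι : Type*} {l : Filter ι} {m n : ι → LUCDual G}
    {m₀ n₀ : LUCDual G} (hm : UEBTendsto G l m m₀) (hn : UEBTendsto G l n n₀) :
    UEBTendsto G l (fun i => conv (m i) (n i)) (conv m₀ n₀) := by
  intro F hF ε hε
  choose W hW hWF using fun k : ℕ => hF.2 (4⁻¹ ^ k) (by positivity)
  have hD : EquiLUC G (controlSet F W) := hSIN.equiLUC_controlSet hF hWF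
  obtain ⟨B, hB⟩ := hD.1
  set δ := min 1 (ε / 2 / (‖m₀‖ + 1))
  have hδ : 0 < δ := by positivity
  filter_upwards [hn _ hD δ hδ,
    hm _ (equiLUC_image2_rAct_controlSet hW (‖n₀‖ * B + 1)) (ε / 2) (half_pos hε)]
    with i hni hmi f hf
  have hni_bound : ∀ d ∈ controlSet F W, ‖n i d‖ ≤ ‖n₀‖ * B + 1 := fun d hd =>
    calc ‖n i d‖ ≤ ‖n₀ d‖ + ‖n i d - n₀ d‖ := norm_le_norm_add_norm_sub' _ _
      _ ≤ ‖n₀‖ * B + 1 := add_le_add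
          ((n₀.le_opNorm d).trans (mul_le_mul_of_nonneg_left (hB d hd) (norm_nonneg _)))
          ((hni d hd).le.trans (min_le_left _ _))
  have hfirst := hmi _ (Set.mem_image2_of_mem hni_bound hf)
  have hsecond : ‖m₀ (rAct (n i - n₀) f)‖ < ε / 2 :=
    calc ‖m₀ (rAct (n i - n₀) f)‖ ≤ ‖m₀‖ * δ :=
          (m₀.le_opNorm _).trans <| mul_le_mul_of_nonneg_left (norm_rAct_le hδ.le fun s =>
            (hni _ (Or.inl (lTrans_mem_translates s hf))).le) (norm_nonneg _)
      _ ≤ ‖m₀‖ * (ε / 2 / (‖m₀‖ + 1)) := by gcongr; exact min_le_right _ _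
      _ < ε / 2 := by
          rw [← mul_div_assoc, div_lt_iff₀ (by positivity)]
          nlinarith [norm_nonneg m₀]
  calc ‖conv (m i) (n i) f - conv m₀ n₀ f‖
      = ‖(m i (rAct (n i) f) - m₀ (rAct (n i) f)) + m₀ (rAct (n i - n₀) f)‖ := by
        rw [conv_apply, conv_apply, sub_rAct, map_sub]; ring_nf
    _ ≤ ‖m i (rAct (n i) f) - m₀ (rAct (n i) f)‖ + ‖m₀ (rAct (n i - n₀) f)‖ := norm_add_le _ _
    _ < ε := by linarith

end Convolution

theorem conv_UEB_jointly_continuous_of_locallyCompact_SIN_general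
    (G : Type*) [Group G] [TopologicalSpace G] [IsTopologicalGroup G]
    (hSIN : IsSIN G) :
    @Continuous (LUCDual G × LUCDual G) (LUCDual G)
      (@instTopologicalSpaceProd _ _ (UEBTop G) (UEBTop G)) (UEBTop G)
      (fun p => conv p.1 p.2) := by
  let _ := UEBTop G
  refine continuous_iff_continuousAt.2 fun p => tendsto_uebTop_iff.2 ?_
  exact hSIN.uebTendsto_conv (tendsto_uebTop_iff.1 (continuous_fst.tendsto p))
    (tendsto_uebTop_iff.1 (continuous_snd.tendsto p))

/-- **Theorem (paper Thm 5.8).** For every locally compact SIN group, convolution is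
jointly UEB continuous on all of `LUC(G)*` (no boundedness restriction). -/
theorem conv_UEB_jointly_continuous_of_locallyCompact_SIN
    (G : Type*) [Group G] [TopologicalSpace G] [IsTopologicalGroup G]
    [LocallyCompactSpace G] (hSIN : IsSIN G) :
    @Continuous (LUCDual G × LUCDual G) (LUCDual G)
      (@instTopologicalSpaceProd _ _ (UEBTop G) (UEBTop G)) (UEBTop G)
      (fun p => conv p.1 p.2) :=
  conv_UEB_jointly_continuous_of_locallyCompact_SIN_general G hSIN
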